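/- arXiv:math/0307164 — 2 statements merged into one kernel-verified Lean document; each statement's English description precedes it below -/
import Mathlib

section
/- Let σ = (Z,P) be a stability condition on a triangulated category D such that P(1) is an abelian category whose short exact sequences are the distinguished triangles in D with all three vertices in P(1), and let A ∈ P(1) be stable, i.e. a simple object of P(1). Suppose given a distinguished triangle C → A →^f D → C[1] with C ∈ P([0,∞)), D ∈ P((−∞,1]), and f ≠ 0. Then C ∈ P(0) and D ∈ P(1). -/
/-!
If the lowest Harder–Narasimhan phase of `D` were `< 1`, the nonzero map from `D` to its last
HN factor would vanish on `A ∈ P(1)`, hence factor through `X[1] ∈ P([1, ∞))`, which is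
impossible; so `D ∈ P(1)`.

If `X ∉ P(0)`, its first HN factor `S ∈ P(φ)` has `φ > 0`, and `S → X → A` is nonzero because
`D[-1] ∈ P((-∞, 0])`; so `φ ≤ 1`. This map is injective on `Hom(B, -)` for `B` semistable of
phase `> 0`, which forces its cone `Q ∈ P([1, ∞))` to lie in `P(1)`. For `φ < 1` the triangle
`S → A → Q` gives `Im Z(A) = Im Z(S) + Im Z(Q)` with `Im Z(S) > 0` and the other two zero; for
`φ = 1` simplicity of `A` makes `S → A` an isomorphism, and then `f = 0`.

Without the octahedral axiom the cone of `S → X` is out of reach, so instead of truncation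
triangles we carry the injectivity property `MonoAbove` along the HN filtration.
-/

open CategoryTheory CategoryTheory.Limits CategoryTheory.Pretriangulated
open CategoryTheory.Triangulated

universe v u

variable (C : Type u) [Category.{v} C] [HasZeroObject C] [HasShift C ℤ]
  [Preadditive C] [∀ n : ℤ, (CategoryTheory.shiftFunctor C n).Additive] [Pretriangulated C]

/-- A Harder–Narasimhan decomposition of an object `E` with respect to a collection of
full subcategories `P φ` (`φ : ℝ`). -/
structure HNFiltration (P : ℝ → Set C) (E : C) where
  n : ℕ
  phase : Fin n → ℝ
  phase_strictAnti : StrictAnti phase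
  obj : Fin (n + 1) → C
  obj_zero : IsZero (obj 0)
  obj_last : obj (Fin.last n) = E
  fac : Fin n → C
  fac_mem : ∀ j, fac j ∈ P (phase j)
  fac_nonzero : ∀ j, ¬ IsZero (fac j)
  triangle : ∀ j : Fin n, ∃ (f : obj j.castSucc ⟶ obj j.succ) (g : obj j.succ ⟶ fac j)
      (h : fac j ⟶ (obj j.castSucc)⟦(1 : ℤ)⟧), Triangle.mk f g h ∈ distTriang C

/-- A stability condition `σ = (Z, P)` on a triangulated category `C`. -/
structure StabilityCondition where
  Z : C → ℂ
  P : ℝ → Set C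
  additive : ∀ T : Triangle C, (T ∈ distTriang C) → Z T.obj₂ = Z T.obj₁ + Z T.obj₃
  P_iso : ∀ (φ : ℝ) (A B : C), (A ≅ B) → A ∈ P φ → B ∈ P φ
  P_zero : ∀ (φ : ℝ) (A : C), IsZero A → A ∈ P φ
  central : ∀ (φ : ℝ) (E : C), E ∈ P φ → ¬ IsZero E →
      ∃ m : ℝ, 0 < m ∧ Z E = m * Complex.exp (Real.pi * φ * Complex.I)
  shift : ∀ (φ : ℝ) (E : C), E ∈ P (φ + 1) ↔ E⟦(-1 : ℤ)⟧ ∈ P φ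
  hom_zero : ∀ (φ₁ φ₂ : ℝ), φ₂ < φ₁ → ∀ (A B : C), A ∈ P φ₁ → B ∈ P φ₂ →
      ∀ f : A ⟶ B, f = 0
  HN : ∀ E : C, ¬ IsZero E → Nonempty (HNFiltration C P E)

/-- The extension-closed full subcategory `P(I)` of `C` generated by the subcategories
`P(φ)` for `φ ∈ I`. -/
inductive PCat (P : ℝ → Set C) (I : Set ℝ) : C → Prop
  | of (φ : ℝ) (hφ : φ ∈ I) (E : C) (hE : E ∈ P φ) : PCat P I E
  | zero (E : C) (hE : IsZero E) : PCat P I E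
  | iso (E F : C) (e : E ≅ F) (hE : PCat P I E) : PCat P I F
  | ext (A E B : C) (f : A ⟶ E) (g : E ⟶ B) (h : B ⟶ A⟦(1 : ℤ)⟧)
      (hT : Triangle.mk f g h ∈ distTriang C) (hA : PCat P I A) (hB : PCat P I B) :
      PCat P I E

/-- An object `S` is stable of phase `φ` in `σ` if it is a simple object of the abelian
category `P(φ)`, whose short exact sequences are the distinguished triangles of `C` with
all three vertices in `P(φ)`. -/
def StabilityCondition.IsStableIn (σ : StabilityCondition C) (φ : ℝ) (S : C) : Prop :=
  S ∈ σ.P φ ∧ ¬ IsZero S ∧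
  ∀ (A B : C) (f : A ⟶ S) (g : S ⟶ B) (h : B ⟶ A⟦(1 : ℤ)⟧),
    (Triangle.mk f g h ∈ distTriang C) → A ∈ σ.P φ → B ∈ σ.P φ →
      IsZero A ∨ IsZero B

variable {C}

open Set

namespace PCat

variable {σ : StabilityCondition C} {I : Set ℝ} {E : C}

lemma hom_to_eq_zero (hE : PCat C σ.P I E) {φ : ℝ} {S : C} (hS : S ∈ σ.P φ)
    (hI : ∀ ψ ∈ I, ψ < φ) (u : S ⟶ E) : u = 0 := by
  induction hE with
  | of ψ hψ B hB => exact σ.hom_zero φ ψ (hI ψ hψ) S B hS hB u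
  | zero B hB => exact hB.eq_of_tgt u 0
  | iso B B' e _ ih => rw [← cancel_mono e.inv, ih (u ≫ e.inv), zero_comp]
  | ext A B B' f g h hT _ _ ihA ihB =>
      obtain ⟨v, rfl⟩ := Triangle.coyoneda_exact₂ _ hT u (ihB (u ≫ g))
      rw [ihA v]; exact zero_comp

lemma hom_from_eq_zero (hE : PCat C σ.P I E) {φ : ℝ} {S : C} (hS : S ∈ σ.P φ)
    (hI : ∀ ψ ∈ I, φ < ψ) (u : E ⟶ S) : u = 0 := by
  induction hE with
  | of ψ hψ B hB => exact σ.hom_zero ψ φ (hI ψ hψ) B S hB hS u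
  | zero B hB => exact hB.eq_of_src u 0
  | iso B B' e _ ih => rw [← cancel_epi e.hom, ih (e.hom ≫ u), comp_zero]
  | ext A B B' f g h hT _ _ ihA ihB =>
      obtain ⟨v, rfl⟩ := Triangle.yoneda_exact₂ _ hT u (ihA (f ≫ u))
      rw [ihB v]; exact comp_zero

end PCat

lemma im_ofReal_mul_exp_pi_mul_I (m x : ℝ) :
    ((m : ℂ) * Complex.exp (Real.pi * x * Complex.I)).im = m * Real.sin (Real.pi * x) := by
  rw [Complex.im_ofReal_mul, ← Complex.exp_ofReal_mul_I_im]
  push_cast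
  rfl

namespace StabilityCondition

variable (σ : StabilityCondition C)

lemma shift_neg_one_mem {φ : ℝ} {E : C} (hE : E ∈ σ.P φ) : E⟦(-1 : ℤ)⟧ ∈ σ.P (φ - 1) :=
  (σ.shift (φ - 1) E).mp (by rwa [sub_add_cancel])

lemma shift_one_mem {φ : ℝ} {E : C} (hE : E ∈ σ.P φ) : E⟦(1 : ℤ)⟧ ∈ σ.P (φ + 1) :=
  (σ.shift φ _).mpr (σ.P_iso φ E _ (shiftShiftNeg E 1).symm hE)

lemma PCat_shift_neg_one {I : Set ℝ} {E : C} (hE : PCat C σ.P I E) :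
    PCat C σ.P {φ | φ + 1 ∈ I} (E⟦(-1 : ℤ)⟧) := by
  induction hE with
  | of ψ hψ B hB => exact .of (ψ - 1) (by simpa using hψ) _ (σ.shift_neg_one_mem hB)
  | zero B hB => exact .zero _ ((shiftFunctor C (-1 : ℤ)).map_isZero hB)
  | iso B B' e _ ih => exact .iso _ _ ((shiftFunctor C (-1 : ℤ)).mapIso e) ih
  | ext A B B' f g h hT _ _ ihA ihB =>
      exact .ext _ _ _ _ _ _ (Triangle.shift_distinguished _ hT (-1)) ihA ihB

lemma PCat_shift_one {I : Set ℝ} {E : C} (hE : PCat C σ.P I E) :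
    PCat C σ.P {φ | φ - 1 ∈ I} (E⟦(1 : ℤ)⟧) := by
  induction hE with
  | of ψ hψ B hB => exact .of (ψ + 1) (by simpa using hψ) _ (σ.shift_one_mem hB)
  | zero B hB => exact .zero _ ((shiftFunctor C (1 : ℤ)).map_isZero hB)
  | iso B B' e _ ih => exact .iso _ _ ((shiftFunctor C (1 : ℤ)).mapIso e) ih
  | ext A B B' f g h hT _ _ ihA ihB =>
      exact .ext _ _ _ _ _ _ (Triangle.shift_distinguished _ hT 1) ihA ihB

lemma Z_eq_zero_of_isZero {W : C} (hW : IsZero W) : σ.Z W = 0 := by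
  have hT : Triangle.mk (𝟙 W) (0 : W ⟶ W) 0 ∈ distTriang C :=
    isomorphic_distinguished _ (contractible_distinguished W) _
      (Triangle.isoMk _ _ (Iso.refl _) (Iso.refl _) (hW.iso (isZero_zero C))
        rfl (hW.eq_of_src _ _) (hW.eq_of_src _ _))
  simpa using σ.additive _ hT

lemma im_Z_eq_zero_of_mem_P_intCast (n : ℤ) {E : C} (hE : E ∈ σ.P n) : (σ.Z E).im = 0 := by
  by_cases hE0 : IsZero E
  · rw [σ.Z_eq_zero_of_isZero hE0, Complex.zero_im]
  obtain ⟨m, -, hZ⟩ := σ.central _ E hE hE0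
  rw [hZ, im_ofReal_mul_exp_pi_mul_I, mul_comm Real.pi, Real.sin_int_mul_pi, mul_zero]

lemma im_Z_pos_of_mem_P {φ : ℝ} {E : C} (hE : E ∈ σ.P φ) (hE0 : ¬IsZero E)
    (h0 : 0 < φ) (h1 : φ < 1) : 0 < (σ.Z E).im := by
  obtain ⟨m, hm, hZ⟩ := σ.central _ E hE hE0
  rw [hZ, im_ofReal_mul_exp_pi_mul_I]
  exact mul_pos hm (Real.sin_pos_of_pos_of_lt_pi (by positivity) (by nlinarith [Real.pi_pos]))

lemma im_Z_obj₁_eq_zero_of_distTriang {S A Q : C} {u : S ⟶ A} {p : A ⟶ Q}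
    {w : Q ⟶ S⟦(1 : ℤ)⟧} (hT : Triangle.mk u p w ∈ distTriang C) (n : ℤ) (hA : A ∈ σ.P n)
    (hQ : Q ∈ σ.P n) : (σ.Z S).im = 0 := by
  have hZ := congrArg Complex.im (σ.additive _ hT)
  simp only [Triangle.mk_obj₁, Triangle.mk_obj₂, Triangle.mk_obj₃, Complex.add_im,
    σ.im_Z_eq_zero_of_mem_P_intCast n hA, σ.im_Z_eq_zero_of_mem_P_intCast n hQ] at hZ
  linarith

def MonoAbove (t : ℝ) {S E : C} (ι : S ⟶ E) : Prop :=
  ∀ ψ, t < ψ → ∀ B ∈ σ.P ψ, ∀ δ : B ⟶ S, δ ≫ ι = 0 → δ = 0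

namespace MonoAbove

variable {σ} {t : ℝ} {S E E' : C} {ι : S ⟶ E}

lemma of_mono (t : ℝ) (ι : S ⟶ E) [Mono ι] : σ.MonoAbove t ι :=
  fun _ _ _ _ _ hδ => (cancel_mono ι).mp (hδ.trans zero_comp.symm)

lemma mono (hι : σ.MonoAbove t ι) {t' : ℝ} (htt' : t ≤ t') : σ.MonoAbove t' ι :=
  fun ψ hψ => hι ψ (htt'.trans_lt hψ)

lemma comp (hι : σ.MonoAbove t ι) {g : E ⟶ E'} (hg : σ.MonoAbove t g) :
    σ.MonoAbove t (ι ≫ g) :=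
  fun ψ hψ B hB δ hδ => hι ψ hψ B hB δ (hg ψ hψ B hB _ (by rw [Category.assoc, hδ]))

lemma ne_zero (hι : σ.MonoAbove t ι) {φ : ℝ} (hS : S ∈ σ.P φ) (hφ : t < φ) (hS0 : ¬IsZero S) :
    ι ≠ 0 := fun h0 =>
  hS0 ((IsZero.iff_id_eq_zero S).mpr (hι φ hφ S hS (𝟙 S) (by rw [h0, comp_zero])))

end MonoAbove

lemma monoAbove_of_distTriang {X A D : C} {g : X ⟶ A} {f : A ⟶ D} {h : D ⟶ X⟦(1 : ℤ)⟧}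
    (hT : Triangle.mk g f h ∈ distTriang C) {c : ℝ} (hD : PCat C σ.P (Iic c) D) :
    σ.MonoAbove (c - 1) g := by
  intro ψ hψ B hB δ hδ
  obtain ⟨ε, rfl⟩ := Triangle.coyoneda_exact₂ _ (inv_rot_of_distTriang _ hT) δ hδ
  rw [(σ.PCat_shift_neg_one hD).hom_to_eq_zero hB (fun φ hφ => by simp at hφ; linarith) ε]
  exact zero_comp

end StabilityCondition

namespace HNFiltration

section

variable {P : ℝ → Set C} {E : C} (F : HNFiltration C P E)

lemma n_pos (hE : ¬IsZero E) : 0 < F.n := by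
  refine Nat.pos_of_ne_zero fun hn => hE ?_
  rw [← F.obj_last, show Fin.last F.n = 0 from Fin.ext (by simp [hn])]
  exact F.obj_zero

lemma phase_le_phase_zero (j : Fin F.n) : F.phase j ≤ F.phase ⟨0, j.pos⟩ :=
  F.phase_strictAnti.antitone (Fin.le_def.mpr (Nat.zero_le _))

lemma phase_sub_one_le (j : Fin F.n) :
    F.phase ⟨F.n - 1, Nat.sub_one_lt_of_lt j.isLt⟩ ≤ F.phase j :=
  F.phase_strictAnti.antitone (Fin.le_def.mpr (by have := j.isLt; simp; omega))

lemma obj_succ_sub_one (hn : 0 < F.n) : F.obj (Fin.succ ⟨F.n - 1, by omega⟩) = E := by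
  rw [show Fin.succ ⟨F.n - 1, _⟩ = Fin.last F.n from Fin.ext (by simp; omega)]
  exact F.obj_last

lemma nonempty_iso_fac_zero (hn : 0 < F.n) :
    Nonempty (F.obj (Fin.succ ⟨0, hn⟩) ≅ F.fac ⟨0, hn⟩) := by
  obtain ⟨f, g, h, hT⟩ := F.triangle ⟨0, hn⟩
  have : IsIso g := (Triangle.isZero₁_iff_isIso₂ _ hT).mp F.obj_zero
  exact ⟨asIso g⟩

lemma obj_mem_PCat {I : Set ℝ} (hI : ∀ j, F.phase j ∈ I) (k : Fin (F.n + 1)) :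
    PCat C P I (F.obj k) := by
  induction k using Fin.induction with
  | zero => exact .zero _ F.obj_zero
  | succ j ih =>
      obtain ⟨f, g, h, hT⟩ := F.triangle j
      exact .ext _ _ _ f g h hT ih (.of _ (hI j) _ (F.fac_mem j))

end

section

variable {σ : StabilityCondition C} {E : C} (F : HNFiltration C σ.P E)

lemma exists_monoAbove_fac_zero (hn : 0 < F.n) :
    ∃ ι : F.fac ⟨0, hn⟩ ⟶ E, σ.MonoAbove (F.phase ⟨0, hn⟩ - 1) ι := by
  have key : ∀ k : Fin (F.n + 1), k ≠ 0 →
      ∃ ι : F.fac ⟨0, hn⟩ ⟶ F.obj k, σ.MonoAbove (F.phase ⟨0, hn⟩ - 1) ι := by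
    intro k
    induction k using Fin.induction with
    | zero => exact fun h => absurd rfl h
    | succ j ih =>
        intro _
        by_cases hj : j = ⟨0, hn⟩
        · subst hj
          obtain ⟨e⟩ := F.nonempty_iso_fac_zero hn
          exact ⟨e.inv, .of_mono _ _⟩
        · obtain ⟨ι, hι⟩ := ih (by simpa [Fin.ext_iff] using hj)
          obtain ⟨f, g, h, hT⟩ := F.triangle j
          have hf := σ.monoAbove_of_distTriang hT (.of _ (mem_Iic.mpr le_rfl) _ (F.fac_mem j))
          exact ⟨ι ≫ f, hι.comp (hf.mono (by linarith [F.phase_le_phase_zero j]))⟩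
  obtain ⟨ι, hι⟩ := key (Fin.last F.n) (Fin.ext_iff.not.mpr (by simp; omega))
  exact ⟨ι ≫ eqToHom F.obj_last, hι.comp (.of_mono _ _)⟩

lemma exists_hom_fac_sub_one_ne_zero (hn : 0 < F.n) :
    ∃ π : E ⟶ F.fac ⟨F.n - 1, by omega⟩, π ≠ 0 := by
  obtain ⟨f, g, h, hT⟩ := F.triangle ⟨F.n - 1, by omega⟩
  refine ⟨eqToHom (F.obj_succ_sub_one hn).symm ≫ g,
    fun h0 => F.fac_nonzero ⟨F.n - 1, by omega⟩ ?_⟩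
  have hg : g = 0 := (cancel_epi _).mp (h0.trans comp_zero.symm)
  obtain ⟨s, hs⟩ := Triangle.yoneda_exact₃ _ hT (𝟙 _) (by rw [Category.comp_id]; exact hg)
  have hobj := σ.PCat_shift_one (F.obj_mem_PCat (I := Ici (F.phase ⟨F.n - 1, by omega⟩))
    F.phase_sub_one_le (Fin.castSucc ⟨F.n - 1, by omega⟩))
  rw [IsZero.iff_id_eq_zero]
  refine hs.trans ?_
  rw [hobj.hom_from_eq_zero (F.fac_mem _) (fun ψ hψ => by simp at hψ; linarith) s]
  exact comp_zero

lemma phase_le_of_mem_Iic {b : ℝ} (hE : PCat C σ.P (Iic b) E) (j : Fin F.n) :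
    F.phase j ≤ b := by
  refine (F.phase_le_phase_zero j).trans (not_lt.mp fun hb => ?_)
  obtain ⟨ι, hι⟩ := F.exists_monoAbove_fac_zero j.pos
  exact hι.ne_zero (F.fac_mem _) (sub_one_lt _) (F.fac_nonzero _)
    (hE.hom_to_eq_zero (F.fac_mem _) (fun ψ hψ => lt_of_le_of_lt hψ hb) ι)

lemma le_phase_of_mem_Ici {a : ℝ} (hE : PCat C σ.P (Ici a) E) (j : Fin F.n) :
    a ≤ F.phase j := by
  refine le_trans (not_lt.mp fun ha => ?_) (F.phase_sub_one_le j)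
  obtain ⟨π, hπ⟩ := F.exists_hom_fac_sub_one_ne_zero j.pos
  exact hπ (hE.hom_from_eq_zero (F.fac_mem _) (fun ψ hψ => lt_of_lt_of_le ha hψ) π)

lemma mem_of_phase_eq (hE : ¬IsZero E) {c : ℝ} (hc : ∀ j, F.phase j = c) : E ∈ σ.P c := by
  have hn := F.n_pos hE
  have hn1 : F.n = 1 := by
    by_contra hne
    have := F.phase_strictAnti (show (⟨0, hn⟩ : Fin F.n) < ⟨1, by omega⟩ from
      Fin.mk_lt_mk.mpr zero_lt_one)
    rw [hc, hc] at this
    exact lt_irrefl _ this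
  obtain ⟨e⟩ := F.nonempty_iso_fac_zero hn
  refine σ.P_iso c _ _ (e.symm ≪≫ eqToIso ?_) (hc _ ▸ F.fac_mem _)
  simpa [hn1] using F.obj_succ_sub_one hn

end

end HNFiltration

namespace StabilityCondition

variable (σ : StabilityCondition C)

lemma exists_monoAbove_of_mem_Ici_of_not_mem {a : ℝ} {E : C} (hE : PCat C σ.P (Ici a) E)
    (hEa : E ∉ σ.P a) :
    ∃ φ, a < φ ∧ ∃ S, S ∈ σ.P φ ∧ ¬IsZero S ∧ ∃ ι : S ⟶ E, σ.MonoAbove (φ - 1) ι := by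
  have hE0 : ¬IsZero E := fun h => hEa (σ.P_zero a E h)
  obtain ⟨F⟩ := σ.HN E hE0
  have hn := F.n_pos hE0
  obtain ⟨ι, hι⟩ := F.exists_monoAbove_fac_zero hn
  refine ⟨_, not_le.mp fun ha => hEa (F.mem_of_phase_eq hE0 fun j => ?_), _, F.fac_mem _,
    F.fac_nonzero _, ι, hι⟩
  exact le_antisymm ((F.phase_le_phase_zero j).trans ha) (F.le_phase_of_mem_Ici hE j)

lemma exists_hom_ne_zero_of_mem_Iic_of_not_mem {b : ℝ} {E : C} (hE : PCat C σ.P (Iic b) E)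
    (hEb : E ∉ σ.P b) : ∃ φ, φ < b ∧ ∃ S, S ∈ σ.P φ ∧ ∃ π : E ⟶ S, π ≠ 0 := by
  have hE0 : ¬IsZero E := fun h => hEb (σ.P_zero b E h)
  obtain ⟨F⟩ := σ.HN E hE0
  have hn := F.n_pos hE0
  obtain ⟨π, hπ⟩ := F.exists_hom_fac_sub_one_ne_zero hn
  refine ⟨_, not_le.mp fun hb => hEb (F.mem_of_phase_eq hE0 fun j => ?_), _, F.fac_mem _,
    π, hπ⟩
  exact le_antisymm (F.phase_le_of_mem_Iic hE j) (hb.trans (F.phase_sub_one_le j))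

lemma obj₃_mem_of_distTriang {X A D : C} {g : X ⟶ A} {f : A ⟶ D} {h : D ⟶ X⟦(1 : ℤ)⟧}
    (hT : Triangle.mk g f h ∈ distTriang C) {a b : ℝ} (hab : b ≤ a + 1) (hA : A ∈ σ.P b)
    (hX : PCat C σ.P (Ici a) X) (hD : PCat C σ.P (Iic b) D) : D ∈ σ.P b := by
  by_contra hDb
  obtain ⟨φ, hφ, S, hS, π, hπ⟩ := σ.exists_hom_ne_zero_of_mem_Iic_of_not_mem hD hDb
  obtain ⟨t, rfl⟩ :=
    Triangle.yoneda_exact₂ _ (rot_of_distTriang _ hT) π (σ.hom_zero _ _ hφ _ _ hA hS _)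
  apply hπ
  rw [(σ.PCat_shift_one hX).hom_from_eq_zero hS (fun ψ hψ => by simp at hψ; linarith) t]
  exact comp_zero

lemma obj₃_mem_of_distTriang_of_monoAbove {S A Q : C} {u : S ⟶ A} {p : A ⟶ Q}
    {w : Q ⟶ S⟦(1 : ℤ)⟧} (hT : Triangle.mk u p w ∈ distTriang C) {b φ : ℝ}
    (hA : A ∈ σ.P b) (hS : S ∈ σ.P φ) (hφ : b - 1 ≤ φ) (hu : σ.MonoAbove (b - 1) u) :
    Q ∈ σ.P b := by
  by_contra hQb
  have hQ : PCat C σ.P (Ici b) Q := .ext _ _ _ p w _ (rot_of_distTriang _ hT)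
    (.of b (mem_Ici.mpr le_rfl) A hA) (.of (φ + 1) (by simp; linarith) _ (σ.shift_one_mem hS))
  obtain ⟨ψ, hψ, K, hK, hK0, β, hβ⟩ := σ.exists_monoAbove_of_mem_Ici_of_not_mem hQ hQb
  apply hβ.ne_zero hK (sub_one_lt ψ) hK0
  have hT' := inv_rot_of_distTriang _ hT
  have hβu : β⟦(-1 : ℤ)⟧' ≫ (Triangle.mk u p w).invRotate.mor₁ = 0 :=
    hu _ (by linarith) _ (σ.shift_neg_one_mem hK) _
      ((Category.assoc _ _ _).trans ((congrArg _ (comp_distTriang_mor_zero₁₂ _ hT')).trans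
        comp_zero))
  obtain ⟨e, he⟩ := Triangle.coyoneda_exact₂ _ (inv_rot_of_distTriang _ hT') _ hβu
  rw [σ.hom_zero _ _ (by linarith) _ _ (σ.shift_neg_one_mem hK) (σ.shift_neg_one_mem hA) e] at he
  exact (shiftFunctor C (-1 : ℤ)).map_eq_zero_iff.mp (he.trans zero_comp)

end StabilityCondition

theorem triangle_on_stable_object (σ : StabilityCondition C)
    (A : C) (hA : σ.IsStableIn C 1 A)
    (X D : C) (g : X ⟶ A) (f : A ⟶ D) (h : D ⟶ X⟦(1 : ℤ)⟧)
    (htri : Triangle.mk g f h ∈ distTriang C)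
    (hX : PCat C σ.P (Set.Ici 0) X) (hD : PCat C σ.P (Set.Iic 1) D)
    (hf : f ≠ 0) :
    X ∈ σ.P 0 ∧ D ∈ σ.P 1 := by
  obtain ⟨hA1, -, hA_simple⟩ := hA
  refine ⟨?_, σ.obj₃_mem_of_distTriang htri (by norm_num) hA1 hX hD⟩
  by_contra hX0
  obtain ⟨φ, hφ, S, hS, hS0, ι, hι⟩ := σ.exists_monoAbove_of_mem_Ici_of_not_mem hX hX0
  have hg : σ.MonoAbove 0 g := by simpa using σ.monoAbove_of_distTriang htri hD
  have hιg : σ.MonoAbove (max (φ - 1) 0) (ι ≫ g) :=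
    (hι.mono (le_max_left _ _)).comp (hg.mono (le_max_right _ _))
  have hφ1 : φ ≤ 1 := not_lt.mp fun h1 => hιg.ne_zero hS (max_lt (by linarith) hφ)
    hS0 (σ.hom_zero _ _ h1 _ _ hS hA1 _)
  obtain ⟨Q, p, w, hQT⟩ := distinguished_cocone_triangle (ι ≫ g)
  have hQ : Q ∈ σ.P 1 := σ.obj₃_mem_of_distTriang_of_monoAbove hQT hA1 hS (by linarith)
    (hιg.mono (by simp [hφ1]))
  rcases hφ1.lt_or_eq with hφ1 | rfl
  · exact (σ.im_Z_pos_of_mem_P hS hS0 hφ hφ1).ne'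
      (σ.im_Z_obj₁_eq_zero_of_distTriang hQT 1 (by simpa using hA1) (by simpa using hQ))
  · rcases hA_simple S Q (ι ≫ g) p w hQT hS hQ with hS0' | hQ0
    · exact hS0 hS0'
    · have : IsIso (ι ≫ g) := (Triangle.isZero₃_iff_isIso₁ _ hQT).mp hQ0
      have hgf : g ≫ f = 0 := comp_distTriang_mor_zero₁₂ _ htri
      exact hf (by rw [← cancel_epi (ι ≫ g), Category.assoc, hgf, comp_zero, comp_zero])
end

section
/- Let A be an abelian category and Z : K(A) → ℂ a stability function on A such that the image of the composite Im ∘ Z : K(A) → ℝ (imaginary part of the central charge) is a discrete subgroup of ℝ. Then there is no infinite chain of subobjects ⋯ ⊂ E_{i+1} ⊂ E_i ⊂ ⋯ ⊂ E₁ ⊂ E₀ in A, with each inclusion E_{i+1} ⊂ E_i proper, such that φ(E_{i+1}) > φ(E_i) for all i, where φ(E) ∈ (0,1] denotes the phase of a nonzero object E. -/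
/-!
Write `Qᵢ = Eᵢ / Eᵢ₊₁`, so that `Z(Eᵢ) = Z(Eᵢ₊₁) + Z(Qᵢ)` and `Im Z(Qᵢ) ≥ 0`. It cannot vanish:
then `Z(Qᵢ)` is a negative real, and adding it to `Z(Eᵢ₊₁)` could not lower the phase, yet
`φ(Eᵢ) < φ(Eᵢ₊₁)`. By discreteness `Im Z(Qᵢ) ≥ δ` for a fixed `δ > 0`, so `Im Z(Eᵢ)` drops by at
least `δ` at every step and eventually becomes negative, which no nonzero object allows.
-/

open CategoryTheory CategoryTheory.Limits

universe v u

variable (𝒜 : Type u) [Category.{v} 𝒜] [Abelian 𝒜]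

/-- The phase `φ(E) ∈ (0,1]` of a nonzero object `E` with `Z(E) = m·exp(iπφ(E))`, `m > 0`:
`φ(E) = arg(Z(E))/π`. -/
noncomputable def phaseOf (z : ℂ) : ℝ := Complex.arg z / Real.pi

namespace Complex

lemma arg_ofReal_mul_exp_mul_I {m θ : ℝ} (hm : 0 < m) (hθ : θ ∈ Set.Ioc (-Real.pi) Real.pi) :
    arg (m * exp (θ * I)) = θ := by
  rw [arg_real_mul _ hm, arg_exp_mul_I, toIocMod_eq_self]
  simpa [two_mul, ← sub_eq_add_neg] using hθ

lemma re_mul_im_sub_im_mul_re (z w : ℂ) :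
    z.re * w.im - z.im * w.re = ‖z‖ * ‖w‖ * Real.sin (arg w - arg z) := by
  rw [Real.sin_sub, ← norm_mul_cos_arg z, ← norm_mul_sin_arg z, ← norm_mul_cos_arg w,
    ← norm_mul_sin_arg w]
  ring

lemma re_mul_im_sub_im_mul_re_pos {z w : ℂ} (hz : 0 < arg z) (hzw : arg z < arg w) :
    0 < z.re * w.im - z.im * w.re := by
  have hz₀ : z ≠ 0 := by rintro rfl; simp at hz
  have hw₀ : w ≠ 0 := by rintro rfl; rw [arg_zero] at hzw; linarith
  rw [re_mul_im_sub_im_mul_re]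
  have hsin : 0 < Real.sin (arg w - arg z) :=
    Real.sin_pos_of_pos_of_lt_pi (sub_pos.2 hzw) (by linarith [arg_le_pi w])
  positivity

lemma im_nonneg_of_arg_pos {z : ℂ} (hz : 0 < arg z) : 0 ≤ z.im :=
  arg_nonneg_iff.1 hz.le

lemma re_neg_of_arg_pos_of_im_eq_zero {z : ℂ} (hz : 0 < arg z) (him : z.im = 0) : z.re < 0 := by
  by_contra! hre
  exact hz.ne' (arg_eq_zero_iff.2 ⟨hre, him⟩)

/-- A negative real `q` would move `z + q` to the left of `z`, which cannot lower the phase. -/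
lemma im_pos_of_arg_add_lt {z q : ℂ} (hz : 0 < arg z) (hq : 0 < arg q) (hzq : 0 < arg (z + q))
    (hlt : arg (z + q) < arg z) : 0 < q.im := by
  refine (im_nonneg_of_arg_pos hq).lt_of_ne' fun hq₀ => ?_
  have hcross := re_mul_im_sub_im_mul_re_pos hzq hlt
  have hcross' : (z + q).re * z.im - (z + q).im * z.re = q.re * z.im := by
    simp only [add_re, add_im, hq₀]; ring
  nlinarith [re_neg_of_arg_pos_of_im_eq_zero hq hq₀, im_nonneg_of_arg_pos hz]

end Complex

lemma not_forall_nonneg_of_le_sub_succ {a : ℕ → ℝ} {δ : ℝ} (hδ : 0 < δ)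
    (h : ∀ n, δ ≤ a n - a (n + 1)) : ¬ ∀ n, 0 ≤ a n := by
  intro hnonneg
  have hle : ∀ n : ℕ, a n ≤ a 0 - n * δ := by
    intro n
    induction n with
    | zero => simp
    | succ n ih => push_cast; linarith [h n]
  obtain ⟨n, hn⟩ := exists_nat_gt (a 0 / δ)
  rw [div_lt_iff₀ hδ] at hn
  linarith [hle n, hnonneg n]

namespace CategoryTheory

variable {𝒞 : Type*} [Category 𝒞] [Abelian 𝒞]

lemma not_isZero_cokernel_of_not_isIso {X Y : 𝒞} (f : X ⟶ Y) [Mono f] (hf : ¬ IsIso f) :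
    ¬ IsZero (cokernel f) := fun h =>
  have : Epi f := Abelian.epi_of_cokernel_π_eq_zero f (h.eq_zero_of_tgt _)
  hf (isIso_of_mono_of_epi f)

lemma eq_add_cokernel_of_additive {Z : 𝒞 → ℂ}
    (hadd : ∀ S : ShortComplex 𝒞, S.ShortExact → Z S.X₂ = Z S.X₁ + Z S.X₃)
    {X Y : 𝒞} (f : X ⟶ Y) [Mono f] : Z Y = Z X + Z (cokernel f) :=
  hadd _ { exact := ShortComplex.cokernelSequence_exact f, mono_f := ‹_›, epi_g := inferInstance }

end CategoryTheory

lemma phaseOf_lt_phaseOf_iff {z w : ℂ} : phaseOf z < phaseOf w ↔ Complex.arg z < Complex.arg w :=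
  div_lt_div_iff_of_pos_right Real.pi_pos

theorem no_increasing_phase_chain_of_discrete_imaginary_part (Z : 𝒜 → ℂ)
    -- `Z` is additive on short exact sequences, i.e. induces a homomorphism `K(𝒜) → ℂ`:
    (hadd : ∀ S : ShortComplex 𝒜, S.ShortExact → Z S.X₂ = Z S.X₁ + Z S.X₃)
    -- `Z` is a stability function: every nonzero object has `Z(E) = m·exp(iπφ)` with
    -- `m > 0` and `φ ∈ (0,1]`:
    (hsf : ∀ E : 𝒜, ¬ IsZero E → ∃ m φ : ℝ, 0 < m ∧ 0 < φ ∧ φ ≤ 1 ∧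
      Z E = m * Complex.exp (Real.pi * φ * Complex.I))
    -- the image of `Im ∘ Z : K(𝒜) → ℝ` is a discrete subgroup of `ℝ`:
    (hdisc : ∃ δ : ℝ, 0 < δ ∧
      ∀ r ∈ AddSubgroup.closure (Set.range fun E : 𝒜 => (Z E).im), r ≠ 0 → δ ≤ |r|) :
    -- then there is no infinite chain `⋯ ⊂ E_{i+1} ⊂ E_i ⊂ ⋯ ⊂ E₁ ⊂ E₀` of proper
    -- subobjects with strictly increasing phases:
    ¬ ∃ (E : ℕ → 𝒜) (f : ∀ i : ℕ, E (i + 1) ⟶ E i),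
      (∀ i : ℕ, Mono (f i)) ∧ (∀ i : ℕ, ¬ IsIso (f i)) ∧ (∀ i : ℕ, ¬ IsZero (E i)) ∧
      (∀ i : ℕ, phaseOf (Z (E i)) < phaseOf (Z (E (i + 1)))) := by
  rintro ⟨E, f, hmono, hniso, hnz, hphase⟩
  obtain ⟨δ, hδ, hdisc⟩ := hdisc
  have harg : ∀ X, ¬ IsZero X → 0 < Complex.arg (Z X) := by
    intro X hX
    obtain ⟨m, φ, hm, hφ₀, hφ₁, hZ⟩ := hsf X hX
    have hθ : Real.pi * φ ∈ Set.Ioc (-Real.pi) Real.pi :=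
      ⟨by nlinarith [Real.pi_pos], by nlinarith [Real.pi_pos]⟩
    rw [hZ, ← Complex.ofReal_mul, Complex.arg_ofReal_mul_exp_mul_I hm hθ]
    exact mul_pos Real.pi_pos hφ₀
  have hdrop : ∀ i, δ ≤ (Z (E i)).im - (Z (E (i + 1))).im := by
    intro i
    have hZ := eq_add_cokernel_of_additive hadd (f i)
    have hQ : 0 < (Z (cokernel (f i))).im := Complex.im_pos_of_arg_add_lt (harg _ (hnz (i + 1)))
      (harg _ (not_isZero_cokernel_of_not_isIso (f i) (hniso i))) (hZ ▸ harg _ (hnz i))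
      (hZ ▸ phaseOf_lt_phaseOf_iff.1 (hphase i))
    have hδQ : δ ≤ |(Z (cokernel (f i))).im| :=
      hdisc _ (AddSubgroup.subset_closure ⟨_, rfl⟩) hQ.ne'
    rw [abs_of_pos hQ] at hδQ
    rw [hZ, Complex.add_im]
    linarith
  exact not_forall_nonneg_of_le_sub_succ hδ hdrop fun n =>
    Complex.im_nonneg_of_arg_pos (harg _ (hnz n))
end
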